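/- Assume Assumption (A). If w, w′ ∈ X, then the componentwise maximum w ∨ w′ and the componentwise minimum w ∧ w′ also belong to X; that is, (X, ∨, ∧) is a lattice. -/
import Mathlib


/-- Critical half squared speed: ŵ_i = (1/2)·(P_max/(M·g·μ·cos α_i))². -/
noncomputable def wHat (M g μ Pmax : ℝ) (α : ℕ → ℝ) (i : ℕ) : ℝ :=
  (1/2) * (Pmax / (M * g * μ * Real.cos (α i)))^2

/-- The function ℓ_i. -/
noncomputable def ell (h γ M g μ Pmax : ℝ) (α : ℕ → ℝ) (i : ℕ) (w : ℝ) : ℝ :=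
  if w ≤ wHat M g μ Pmax α i then (1 - h*γ)*w + h*(g*μ*Real.cos (α i))
  else (1 - h*γ)*w + h*(Pmax/(M*Real.sqrt (2*w)))

/-- Assumption (A). -/
def AssumptionA (n : ℕ) (h γ M g μ Pmax : ℝ) (α : ℕ → ℝ) : Prop :=
  ∀ i, 1 ≤ i → i ≤ n - 1 →
    0 ≤ 1 - h*γ - h*(Pmax/(M*(2*wHat M g μ Pmax α i) ^ ((3:ℝ)/2)))


/-- Combined maximum-force/maximum-power constraint (U_i) for all i ∈ {1,…,n−1}. -/
def constrU (n : ℕ) (h γ M g μ Pmax c : ℝ) (α : ℕ → ℝ) (w : ℕ → ℝ) : Prop :=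
  ∀ i, 1 ≤ i → i ≤ n - 1 →
    w (i+1) ≤ ell h γ M g μ Pmax α i (w i) - h*g*(Real.sin (α i) + c*Real.cos (α i))

/-- Minimum-force constraint (L_i) for all i ∈ {1,…,n−1}. -/
def constrL (n : ℕ) (h γ g μ c : ℝ) (α : ℕ → ℝ) (w : ℕ → ℝ) : Prop :=
  ∀ i, 1 ≤ i → i ≤ n - 1 →
    (1 - h*γ)*(w i) - h*g*(Real.sin (α i) + (c+μ)*Real.cos (α i)) ≤ w (i+1)

/-- Componentwise lower bounds on indices 1..n. -/
def lowerBd (n : ℕ) (wmin w : ℕ → ℝ) : Prop := ∀ i, 1 ≤ i → i ≤ n → wmin i ≤ w i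

/-- Componentwise upper bounds on indices 1..n. -/
def upperBd (n : ℕ) (wmax w : ℕ → ℝ) : Prop := ∀ i, 1 ≤ i → i ≤ n → w i ≤ wmax i

/-- Membership in the feasible set X. -/
def memX (n : ℕ) (h γ M g μ Pmax c : ℝ) (α wmin wmax : ℕ → ℝ) (w : ℕ → ℝ) : Prop :=
  constrU n h γ M g μ Pmax c α w ∧ constrL n h γ g μ c α w ∧
    lowerBd n wmin w ∧ upperBd n wmax w

set_option maxHeartbeats 1000000 in
/-- Monotonicity of the second branch of ℓ on [ŵ, ∞). -/
lemma ell2_mono (h M g μ γ Pmax : ℝ)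
    (hh : 0 < h) (hM : 0 < M) (hhγ : h * γ < 1) (hP : 0 < Pmax)
    (wh : ℝ) (hwh : 0 < wh)
    (hAi : 0 ≤ 1 - h*γ - h*(Pmax/(M*(2*wh) ^ ((3:ℝ)/2))))
    (a b : ℝ) (ha : wh ≤ a) (hab : a ≤ b) :
    (1 - h*γ)*a + h*(Pmax/(M*Real.sqrt (2*a))) ≤
      (1 - h*γ)*b + h*(Pmax/(M*Real.sqrt (2*b))) := by
  have h2a : (0:ℝ) < 2*a := by linarith
  have h2b : (0:ℝ) < 2*b := by linarith
  set sa := Real.sqrt (2*a) with hsa_def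
  set sb := Real.sqrt (2*b) with hsb_def
  have hsa : 0 < sa := Real.sqrt_pos.2 h2a
  have hsb : 0 < sb := Real.sqrt_pos.2 h2b
  have hsab : sa ≤ sb := Real.sqrt_le_sqrt (by linarith)
  have hsa2 : sa^2 = 2*a := Real.sq_sqrt h2a.le
  have hsb2 : sb^2 = 2*b := Real.sq_sqrt h2b.le
  -- rewrite assumption A
  have hW : (2*wh) ^ ((3:ℝ)/2) = (2*wh) * Real.sqrt (2*wh) := by
    have h2w : (0:ℝ) < 2*wh := by linarith
    rw [show ((3:ℝ)/2) = 1 + 1/2 by norm_num, Real.rpow_add h2w, Real.rpow_one,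
      Real.sqrt_eq_rpow]
  have hWpos : (0:ℝ) < (2*wh) * Real.sqrt (2*wh) := by
    have h2w : (0:ℝ) < 2*wh := by linarith
    exact mul_pos h2w (Real.sqrt_pos.2 h2w)
  have hkey : h*Pmax ≤ (1 - h*γ) * (M*((2*wh) * Real.sqrt (2*wh))) := by
    rw [hW] at hAi
    have := (div_le_iff₀ (mul_pos hM hWpos)).1 (by
      have : h*(Pmax/(M*((2*wh) * Real.sqrt (2*wh)))) ≤ 1 - h*γ := by linarith
      calc h*Pmax/(M*((2*wh) * Real.sqrt (2*wh)))
          = h*(Pmax/(M*((2*wh) * Real.sqrt (2*wh)))) := by ring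
        _ ≤ 1 - h*γ := this)
    linarith
  have hwh_sa : Real.sqrt (2*wh) ≤ sa := Real.sqrt_le_sqrt (by linarith)
  have hwh_sa2 : 2*wh ≤ sa^2 := by rw [hsa2]; linarith
  have hkey2 : h*Pmax ≤ (1 - h*γ) * (M*(sa^2*sa)) := by
    have h1 : 0 ≤ 1 - h*γ := by linarith
    have hsq : (0:ℝ) ≤ Real.sqrt (2*wh) := Real.sqrt_nonneg _
    have hle : (2*wh) * Real.sqrt (2*wh) ≤ sa^2*sa := by nlinarith
    nlinarith [mul_le_mul_of_nonneg_left hle (mul_nonneg h1 hM.le)]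
  have heq : h*(Pmax/(M*sa)) - h*(Pmax/(M*sb)) = h*Pmax*(sb-sa)/(M*(sa*sb)) := by
    field_simp
  have hmain : h*Pmax*(sb-sa)/(M*(sa*sb)) ≤ (1 - h*γ)*(b-a) := by
    rw [div_le_iff₀ (by positivity)]
    have h1 : 0 ≤ 1 - h*γ := by linarith
    have h2 : 0 ≤ sb - sa := by linarith
    have hba : b - a = (sb^2 - sa^2)/2 := by linarith
    have key3 : sa^2*sa*(sb-sa) ≤ (b-a)*(sa*sb) := by
      rw [hba]
      nlinarith [mul_nonneg (mul_nonneg (sq_nonneg (sb-sa)) hsa.le)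
        (by linarith : (0:ℝ) ≤ sb + 2*sa)]
    calc h*Pmax*(sb-sa) ≤ ((1 - h*γ)*(M*(sa^2*sa)))*(sb-sa) :=
          mul_le_mul_of_nonneg_right hkey2 h2
      _ ≤ ((1 - h*γ)*M)*((b-a)*(sa*sb)) := by
          nlinarith [mul_le_mul_of_nonneg_left key3 (mul_nonneg h1 hM.le)]
      _ = (1 - h*γ)*(b-a)*(M*(sa*sb)) := by ring
  linarith [hmain]

/-- ℓ_i is monotone. -/
lemma ell_mono (h M g μ γ Pmax : ℝ)
    (hh : 0 < h) (hM : 0 < M) (hg : 0 < g) (hμ : 0 < μ)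
    (hhγ : h * γ < 1) (hP : 0 < Pmax) (α : ℕ → ℝ) (i : ℕ)
    (hcosi : 0 < Real.cos (α i))
    (hAi : 0 ≤ 1 - h*γ - h*(Pmax/(M*(2*wHat M g μ Pmax α i) ^ ((3:ℝ)/2))))
    : Monotone (ell h γ M g μ Pmax α i) := by
  intro a b hab
  set wh := wHat M g μ Pmax α i with hwh_def
  have hD : 0 < M * g * μ * Real.cos (α i) := by positivity
  have hwh : 0 < wh := by
    rw [hwh_def, wHat]
    positivity
  have hbdry : g*μ*Real.cos (α i) = Pmax/(M*Real.sqrt (2*wh)) := by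
    have : 2*wh = (Pmax / (M * g * μ * Real.cos (α i)))^2 := by
      rw [hwh_def, wHat]; ring
    rw [this, Real.sqrt_sq (by positivity)]
    field_simp
  unfold ell
  rcases le_or_gt b wh with hb | hb
  · have ha' : a ≤ wh := le_trans hab hb
    rw [if_pos ha', if_pos hb]
    have : 0 ≤ 1 - h*γ := by linarith
    nlinarith
  · rw [if_neg (not_le.2 hb)]
    rcases le_or_gt a wh with ha | ha
    · rw [if_pos ha]
      have step1 : (1 - h*γ)*a + h*(g*μ*Real.cos (α i)) ≤
          (1 - h*γ)*wh + h*(Pmax/(M*Real.sqrt (2*wh))) := by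
        rw [← hbdry]
        have : 0 ≤ 1 - h*γ := by linarith
        nlinarith
      have step2 := ell2_mono h M g μ γ Pmax hh hM hhγ hP wh hwh hAi wh b le_rfl hb.le
      linarith
    · rw [if_neg (not_le.2 ha)]
      exact ell2_mono h M g μ γ Pmax hh hM hhγ hP wh hwh hAi a b ha.le hab

theorem stmt5 (n : ℕ) (hn : 2 ≤ n) (h M g μ γ c Pmax : ℝ)
    (hh : 0 < h) (hM : 0 < M) (hg : 0 < g) (hμ : 0 < μ)
    (hγ0 : 0 ≤ γ) (hhγ : h * γ < 1) (hc : 0 ≤ c) (hP : 0 < Pmax)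
    (α : ℕ → ℝ) (hcos : ∀ i, 1 ≤ i → i ≤ n - 1 → 0 < Real.cos (α i))
    (hA : AssumptionA n h γ M g μ Pmax α)
    (win wfin : ℝ) (hwin : 0 ≤ win) (hwfin : 0 ≤ wfin)
    (wmax wmin : ℕ → ℝ)
    (hwmax1 : wmax 1 = win) (hwmaxn : wmax n = wfin)
    (hwmin1 : wmin 1 = win) (hwminn : wmin n = wfin)
    (hwmin0 : ∀ i, 1 < i → i < n → wmin i = 0)
    (w w' : ℕ → ℝ)
    (hw : memX n h γ M g μ Pmax c α wmin wmax w)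
    (hw' : memX n h γ M g μ Pmax c α wmin wmax w') :
    memX n h γ M g μ Pmax c α wmin wmax (fun i => max (w i) (w' i)) ∧
      memX n h γ M g μ Pmax c α wmin wmax (fun i => min (w i) (w' i)) := by
  obtain ⟨hU, hL, hlo, hhi⟩ := hw
  obtain ⟨hU', hL', hlo', hhi'⟩ := hw'
  have h1γ : (0:ℝ) ≤ 1 - h*γ := by linarith
  have hmono : ∀ i, 1 ≤ i → i ≤ n - 1 → Monotone (ell h γ M g μ Pmax α i) :=
    fun i h1 h2 => ell_mono h M g μ γ Pmax hh hM hg hμ hhγ hP α i (hcos i h1 h2) (hA i h1 h2)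
  constructor
  · refine ⟨fun i h1 h2 => ?_, fun i h1 h2 => ?_, fun i h1 h2 => ?_, fun i h1 h2 => ?_⟩
    · apply max_le
      · exact le_trans (hU i h1 h2) (by
          have := hmono i h1 h2 (le_max_left (w i) (w' i)); simpa using by linarith)
      · exact le_trans (hU' i h1 h2) (by
          have := hmono i h1 h2 (le_max_right (w i) (w' i)); simpa using by linarith)
    · rcases le_total (w' i) (w i) with hle | hle
      · simp only [max_eq_left hle]
        exact le_trans (hL i h1 h2) (le_max_left _ _)
      · simp only [max_eq_right hle]
        exact le_trans (hL' i h1 h2) (le_max_right _ _)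
    · exact le_trans (hlo i h1 h2) (le_max_left _ _)
    · exact max_le (hhi i h1 h2) (hhi' i h1 h2)
  · refine ⟨fun i h1 h2 => ?_, fun i h1 h2 => ?_, fun i h1 h2 => ?_, fun i h1 h2 => ?_⟩
    · rcases le_total (w i) (w' i) with hle | hle
      · simp only [min_eq_left hle]
        exact le_trans (min_le_left _ _) (hU i h1 h2)
      · simp only [min_eq_right hle]
        exact le_trans (min_le_right _ _) (hU' i h1 h2)
    · apply le_min
      · refine le_trans ?_ (hL i h1 h2)
        have := mul_le_mul_of_nonneg_left (min_le_left (w i) (w' i)) h1γ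
        simpa using by linarith
      · refine le_trans ?_ (hL' i h1 h2)
        have := mul_le_mul_of_nonneg_left (min_le_right (w i) (w' i)) h1γ
        simpa using by linarith
    · exact le_min (hlo i h1 h2) (hlo' i h1 h2)
    · exact le_trans (min_le_left _ _) (hhi i h1 h2)
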